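/- arXiv:1810.04258 — 4 statements merged into one kernel-verified Lean document; each statement's English description precedes it below -/
import Mathlib

section
/- In the Mermin–Peres square of 2-qubit Pauli operators with rows (I⊗Z, Z⊗I, Z⊗Z), (X⊗I, I⊗X, X⊗X), (X⊗Z, Z⊗X, Y⊗Y), the three operators in each row and in each column pairwise commute, the product of the operators along each row and along the first two columns is the identity I₄, and the product along the third column is −I₄. -/
/-!
Two Kronecker products `A ⊗ B` and `C ⊗ D` commute as soon as `A, C` and `B, D` either both
commute or both anticommute, since the two signs cancel. Every product along a line of the
square factors as `(A C E) ⊗ (B D F)`, and the Pauli relations `X² = Z² = 1`,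
`X Z Y = -i` and `Z X Y = i` make each factor a scalar: the third row gives `(-i) · i = 1`,
whereas the third column gives `i · i = -1`.
-/

open Kronecker Matrix

noncomputable def PX : Matrix (Fin 2) (Fin 2) ℂ := !![0, 1; 1, 0]
noncomputable def PY : Matrix (Fin 2) (Fin 2) ℂ := !![0, -Complex.I; Complex.I, 0]
noncomputable def PZ : Matrix (Fin 2) (Fin 2) ℂ := !![1, 0; 0, -1]

/-- The Mermin–Peres magic square of two-qubit Pauli operators. -/
noncomputable def MerminSquare : Fin 3 → Fin 3 → Matrix (Fin 2 × Fin 2) (Fin 2 × Fin 2) ℂ :=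
  ![![(1 : Matrix (Fin 2) (Fin 2) ℂ) ⊗ₖ PZ, PZ ⊗ₖ (1 : Matrix (Fin 2) (Fin 2) ℂ), PZ ⊗ₖ PZ],
    ![PX ⊗ₖ (1 : Matrix (Fin 2) (Fin 2) ℂ), (1 : Matrix (Fin 2) (Fin 2) ℂ) ⊗ₖ PX, PX ⊗ₖ PX],
    ![PX ⊗ₖ PZ, PZ ⊗ₖ PX, PY ⊗ₖ PY]]

def Anticommute {M : Type*} [Mul M] [Neg M] (a b : M) : Prop := a * b = -(b * a)

theorem Anticommute.symm {M : Type*} [Mul M] [InvolutiveNeg M] {a b : M}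
    (h : Anticommute a b) : Anticommute b a := by
  rw [Anticommute, h, neg_neg]

theorem forall_commute_fin_three {M : Type*} [Mul M] {v : Fin 3 → M}
    (h01 : Commute (v 0) (v 1)) (h02 : Commute (v 0) (v 2)) (h12 : Commute (v 1) (v 2)) :
    ∀ k k', Commute (v k) (v k') := by
  intro k k'
  fin_cases k <;> fin_cases k' <;> simp [h01, h02, h12, h01.symm, h02.symm, h12.symm]

namespace Matrix

variable {l m n p α : Type*}

theorem neg_kronecker [Mul α] [HasDistribNeg α] (A : Matrix l m α) (B : Matrix n p α) :
    (-A) ⊗ₖ B = -(A ⊗ₖ B) := by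
  ext; simp

theorem kronecker_neg [Mul α] [HasDistribNeg α] (A : Matrix l m α) (B : Matrix n p α) :
    A ⊗ₖ (-B) = -(A ⊗ₖ B) := by
  ext; simp

theorem smul_one_kronecker_smul_one [DecidableEq m] [DecidableEq n] [CommSemiring α] (a b : α) :
    (a • 1 : Matrix m m α) ⊗ₖ (b • 1 : Matrix n n α) = (a * b) • 1 := by
  rw [smul_kronecker, kronecker_smul, one_kronecker_one, smul_smul, mul_comm]

variable [Fintype m] [Fintype n] [CommRing α]

theorem kronecker_mul_kronecker_mul_kronecker (A C E : Matrix m m α) (B D F : Matrix n n α) :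
    A ⊗ₖ B * (C ⊗ₖ D) * (E ⊗ₖ F) = (A * C * E) ⊗ₖ (B * D * F) := by
  rw [mul_kronecker_mul, mul_kronecker_mul]

theorem commute_kronecker {A C : Matrix m m α} {B D : Matrix n n α}
    (hAC : Commute A C) (hBD : Commute B D) : Commute (A ⊗ₖ B) (C ⊗ₖ D) := by
  rw [commute_iff_eq, ← mul_kronecker_mul, ← mul_kronecker_mul, hAC.eq, hBD.eq]

theorem commute_kronecker_of_anticommute {A C : Matrix m m α} {B D : Matrix n n α}
    (hAC : Anticommute A C) (hBD : Anticommute B D) : Commute (A ⊗ₖ B) (C ⊗ₖ D) := by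
  rw [commute_iff_eq, ← mul_kronecker_mul, ← mul_kronecker_mul, hAC, hBD, neg_kronecker,
    kronecker_neg, neg_neg]

end Matrix

theorem PX_mul_PX : PX * PX = 1 := by
  ext i j; fin_cases i <;> fin_cases j <;> simp [PX]

theorem PY_mul_PY : PY * PY = 1 := by
  ext i j; fin_cases i <;> fin_cases j <;> simp [PY]

theorem PZ_mul_PZ : PZ * PZ = 1 := by
  ext i j; fin_cases i <;> fin_cases j <;> simp [PZ]

theorem PZ_mul_PX : PZ * PX = Complex.I • PY := by
  ext i j; fin_cases i <;> fin_cases j <;> simp [PX, PY, PZ]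

theorem PX_mul_PZ : PX * PZ = -(Complex.I • PY) := by
  ext i j; fin_cases i <;> fin_cases j <;> simp [PX, PY, PZ]

theorem PZ_mul_PX_mul_PY : PZ * PX * PY = Complex.I • 1 := by
  rw [PZ_mul_PX, smul_mul_assoc, PY_mul_PY]

theorem PX_mul_PZ_mul_PY : PX * PZ * PY = -(Complex.I • 1) := by
  rw [PX_mul_PZ, neg_mul, smul_mul_assoc, PY_mul_PY]

theorem anticommute_PX_PZ : Anticommute PX PZ := by
  rw [Anticommute, PX_mul_PZ, PZ_mul_PX]

theorem anticommute_PX_PY : Anticommute PX PY := by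
  ext i j; fin_cases i <;> fin_cases j <;> simp [PX, PY]

theorem anticommute_PZ_PY : Anticommute PZ PY := by
  ext i j; fin_cases i <;> fin_cases j <;> simp [PZ, PY]

/-- In the Mermin–Peres square, the operators in each row and each column pairwise
commute, each row multiplies to the identity, the first two columns multiply to the
identity, and the third column multiplies to minus the identity. -/
theorem mermin_peres_square :
    (∀ i j j' : Fin 3, Commute (MerminSquare i j) (MerminSquare i j')) ∧
    (∀ j i i' : Fin 3, Commute (MerminSquare i j) (MerminSquare i' j)) ∧
    (∀ i : Fin 3, MerminSquare i 0 * MerminSquare i 1 * MerminSquare i 2 = 1) ∧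
    (MerminSquare 0 0 * MerminSquare 1 0 * MerminSquare 2 0 = 1) ∧
    (MerminSquare 0 1 * MerminSquare 1 1 * MerminSquare 2 1 = 1) ∧
    (MerminSquare 0 2 * MerminSquare 1 2 * MerminSquare 2 2 = -1) := by
  refine ⟨fun i => ?_, fun j => ?_, fun i => ?_, ?_, ?_, ?_⟩
  · refine forall_commute_fin_three (v := MerminSquare i) ?_ ?_ ?_ <;> fin_cases i <;>
      simp [MerminSquare, commute_kronecker, commute_kronecker_of_anticommute,
        anticommute_PX_PZ, anticommute_PX_PZ.symm, anticommute_PX_PY, anticommute_PZ_PY]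
  · refine forall_commute_fin_three (v := (MerminSquare · j)) ?_ ?_ ?_ <;> fin_cases j <;>
      simp [MerminSquare, commute_kronecker, commute_kronecker_of_anticommute,
        anticommute_PX_PZ.symm, anticommute_PX_PY, anticommute_PZ_PY]
  · fin_cases i <;>
      simp [MerminSquare, kronecker_mul_kronecker_mul_kronecker, PX_mul_PX, PZ_mul_PZ,
        PX_mul_PZ_mul_PY, PZ_mul_PX_mul_PY, smul_one_kronecker_smul_one, neg_kronecker]
  all_goals
    simp [MerminSquare, kronecker_mul_kronecker_mul_kronecker, PX_mul_PX, PZ_mul_PZ,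
      PZ_mul_PX_mul_PY, smul_one_kronecker_smul_one]
end

section
/- If H₁ and H₂ are two distinct geometric hyperplanes of a point-line geometry in which every line has exactly 3 points, then the complement of their symmetric difference, H₃ = complement(H₁ Δ H₂), is also a geometric hyperplane. -/
/-!
On a line with three points, a set `H` meets the line as a hyperplane does (containing it, or
meeting it in exactly one point) iff an even number of the line's points lie outside `H`.
The points of a line outside `(H₁ ∆ H₂)ᶜ` form the symmetric difference of the points outside
`H₁` and outside `H₂`, and the cardinality of a symmetric difference has the parity of the sum
of the two cardinalities.
-/

def IsGeomHyperplane {P : Type*} (L : Set (Set P)) (H : Set P) : Prop :=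
  ∀ l ∈ L, l ⊆ H ∨ (∃! x, x ∈ l ∧ x ∈ H)

open scoped symmDiff

namespace Set

variable {α : Type*}

theorem ncard_symmDiff_add_two_mul_ncard_inter {s t : Set α} (hs : s.Finite) (ht : t.Finite) :
    (s ∆ t).ncard + 2 * (s ∩ t).ncard = s.ncard + t.ncard := by
  rw [Set.symmDiff_def, ncard_union_eq disjoint_sdiff_sdiff hs.sdiff ht.sdiff,
    ← ncard_inter_add_ncard_sdiff_eq_ncard s t hs, ← ncard_inter_add_ncard_sdiff_eq_ncard t s ht,
    inter_comm t s]
  ring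

theorem even_ncard_symmDiff_iff {s t : Set α} (hs : s.Finite) (ht : t.Finite) :
    Even (s ∆ t).ncard ↔ (Even s.ncard ↔ Even t.ncard) := by
  have h := congrArg Even (ncard_symmDiff_add_two_mul_ncard_inter hs ht)
  simp only [Nat.even_add, even_two_mul, iff_true] at h
  rw [h]

theorem existsUnique_mem_iff_ncard_eq_one {s : Set α} : (∃! x, x ∈ s) ↔ s.ncard = 1 := by
  simp only [ncard_eq_one, eq_singleton_iff_unique_mem, ExistsUnique]

theorem sdiff_compl_symmDiff (l s t : Set α) : l \ (s ∆ t)ᶜ = (l \ s) ∆ (l \ t) := by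
  ext x
  simp only [mem_sdiff, mem_compl_iff, mem_symmDiff, not_not]
  tauto

end Set

open Set

theorem subset_or_existsUnique_mem_inter_iff_even_ncard_sdiff {P : Type*} {l H : Set P}
    (hl : l.ncard = 3) : (l ⊆ H ∨ ∃! x, x ∈ l ∧ x ∈ H) ↔ Even (l \ H).ncard := by
  have hfin : l.Finite := finite_of_ncard_ne_zero (by omega)
  have hsplit := ncard_inter_add_ncard_sdiff_eq_ncard l H hfin
  have hunique : (∃! x, x ∈ l ∧ x ∈ H) ↔ (l ∩ H).ncard = 1 := existsUnique_mem_iff_ncard_eq_one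
  rw [← sdiff_eq_empty, ← ncard_eq_zero hfin.sdiff, hunique, Nat.even_iff]
  omega

theorem isGeomHyperplane_iff_forall_even_ncard_sdiff {P : Type*} {L : Set (Set P)}
    (hL : ∀ l ∈ L, l.ncard = 3) {H : Set P} :
    IsGeomHyperplane L H ↔ ∀ l ∈ L, Even (l \ H).ncard :=
  forall₂_congr fun l hl => subset_or_existsUnique_mem_inter_iff_even_ncard_sdiff (hL l hl)

theorem boxplus_of_hyperplanes_is_hyperplane_general {P : Type*} (L : Set (Set P))
    (hL : ∀ l ∈ L, l.ncard = 3) (H₁ H₂ : Set P)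
    (h₁ : IsGeomHyperplane L H₁) (h₂ : IsGeomHyperplane L H₂) :
    IsGeomHyperplane L (symmDiff H₁ H₂)ᶜ := by
  rw [isGeomHyperplane_iff_forall_even_ncard_sdiff hL] at h₁ h₂ ⊢
  intro l hl
  have hfin : l.Finite := finite_of_ncard_ne_zero (by rw [hL l hl]; norm_num)
  rw [sdiff_compl_symmDiff, even_ncard_symmDiff_iff hfin.sdiff hfin.sdiff]
  exact iff_of_true (h₁ l hl) (h₂ l hl)

/-- In a point-line geometry all of whose lines have exactly 3 points, the complement
of the symmetric difference of two distinct geometric hyperplanes is again a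
geometric hyperplane. -/
theorem boxplus_of_hyperplanes_is_hyperplane {P : Type*} (L : Set (Set P))
    (hL : ∀ l ∈ L, l.ncard = 3) (H₁ H₂ : Set P)
    (h₁ : IsGeomHyperplane L H₁) (h₂ : IsGeomHyperplane L H₂) (hne : H₁ ≠ H₂) :
    IsGeomHyperplane L (symmDiff H₁ H₂)ᶜ :=
  boxplus_of_hyperplanes_is_hyperplane_general L hL H₁ H₂ h₁ h₂
end

section
/- Every tensor in ℂ² ⊗ ℂ² ⊗ ℂ² is a sum of at most 4 pure tensors; moreover, the GHZ state |000⟩ + |111⟩ has tensor rank exactly 2, i.e. it is a sum of 2 pure tensors but is not itself a pure tensor. -/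
/-!
Slicing a tensor along its last two factors writes it as `∑_{j,k} T(·, j, k) ⊗ e_j ⊗ e_k`,
four pure tensors. The GHZ state is visibly `e₀⊗e₀⊗e₀ + e₁⊗e₁⊗e₁`. It is not pure because
every pure tensor satisfies the binomial relation `T₀₀₀ T₁₁₁ = T₀₀₁ T₁₁₀` (a `2 × 2` minor of
its flattening), which the GHZ state violates: `1 · 1 ≠ 0 · 0`.
-/

/-- A pure (rank-one) tensor `u ⊗ v ⊗ w` in `ℂ² ⊗ ℂ² ⊗ ℂ²`, written as a
hypermatrix. -/
def pureT (u v w : Fin 2 → ℂ) : Fin 2 → Fin 2 → Fin 2 → ℂ :=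
  fun i j k => u i * v j * w k

/-- The standard basis vector `e_a` of `ℂ²`. -/
noncomputable def e (a : Fin 2) : Fin 2 → ℂ := Pi.single a 1

/-- The basis tensor `|abc⟩ = e_a ⊗ e_b ⊗ e_c`. -/
noncomputable def ket (a b c : Fin 2) : Fin 2 → Fin 2 → Fin 2 → ℂ :=
  pureT (e a) (e b) (e c)

@[simp]
theorem pureT_apply (u v w : Fin 2 → ℂ) (i j k : Fin 2) : pureT u v w i j k = u i * v j * w k :=
  rfl

theorem eq_sum_pureT_slices (T : Fin 2 → Fin 2 → Fin 2 → ℂ) :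
    T = ∑ j, ∑ k, pureT (fun i => T i j k) (e j) (e k) := by
  funext i j k
  simp only [Finset.sum_apply, pureT_apply, e, Pi.single_apply, mul_ite, mul_one, mul_zero,
    Finset.sum_ite_eq, Finset.mem_univ, if_true]

theorem exists_eq_sum_four_pureT (T : Fin 2 → Fin 2 → Fin 2 → ℂ) :
    ∃ u v w : Fin 4 → Fin 2 → ℂ, T = ∑ r, pureT (u r) (v r) (w r) := by
  let jk : Fin 4 ≃ Fin 2 × Fin 2 := (finProdFinEquiv (m := 2) (n := 2)).symm
  refine ⟨fun r i => T i (jk r).1 (jk r).2, fun r => e (jk r).1, fun r => e (jk r).2, ?_⟩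
  calc T = ∑ j, ∑ k, pureT (fun i => T i j k) (e j) (e k) := eq_sum_pureT_slices T
    _ = ∑ p : Fin 2 × Fin 2, pureT (fun i => T i p.1 p.2) (e p.1) (e p.2) :=
      (Fintype.sum_prod_type' _).symm
    _ = _ := (jk.sum_comp _).symm

theorem ghz_eq_sum_pureT :
    ket 0 0 0 + ket 1 1 1 = ∑ r : Fin 2, pureT (e r) (e r) (e r) := by
  simp [ket, Fin.sum_univ_two]

theorem pureT_mul_pureT_swap_last (u v w : Fin 2 → ℂ) (i j k i' j' k' : Fin 2) :
    pureT u v w i j k * pureT u v w i' j' k' = pureT u v w i j k' * pureT u v w i' j' k := by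
  simp only [pureT_apply]
  ring

theorem ghz_ne_pureT (u v w : Fin 2 → ℂ) : ket 0 0 0 + ket 1 1 1 ≠ pureT u v w := by
  intro h
  have minor := pureT_mul_pureT_swap_last u v w 0 0 0 1 1 1
  rw [← h] at minor
  simp [ket, e] at minor

/-- Every tensor in `ℂ² ⊗ ℂ² ⊗ ℂ²` is a sum of at most 4 pure tensors; the GHZ state
`|000⟩ + |111⟩` is a sum of 2 pure tensors but is not a pure tensor, i.e. it has
tensor rank exactly 2. -/
theorem ghz_rank_two :
    (∀ T : Fin 2 → Fin 2 → Fin 2 → ℂ,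
      ∃ u v w : Fin 4 → Fin 2 → ℂ, T = ∑ r, pureT (u r) (v r) (w r)) ∧
    (∃ u v w : Fin 2 → Fin 2 → ℂ,
      ket 0 0 0 + ket 1 1 1 = ∑ r, pureT (u r) (v r) (w r)) ∧
    ¬ (∃ u v w : Fin 2 → ℂ, ket 0 0 0 + ket 1 1 1 = pureT u v w) :=
  ⟨exists_eq_sum_four_pureT, ⟨e, e, e, ghz_eq_sum_pureT⟩,
    fun ⟨u, v, w, h⟩ => ghz_ne_pureT u v w h⟩
end

section
/- The W state |100⟩ + |010⟩ + |001⟩ ∈ ℂ² ⊗ ℂ² ⊗ ℂ² has tensor rank 3: it cannot be written as a sum of two pure tensors, but it is a sum of three pure tensors. -/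
/-! Contracting the third factor with a covector `φ` turns a tensor `T` into a `2 × 2` matrix
`T(φ)`. For `T = ∑ r, u r ⊗ v r ⊗ w r` with two terms this matrix is `Uᵀ · diag ⟨w r, φ⟩ · V`, so
`det T(φ) = det U · det V · ⟨w 0, φ⟩ · ⟨w 1, φ⟩` is a product of two linear forms in `φ`. For the
W state `det W(φ) = -φ₀²`, which forces both forms to be multiples of `φ₀`: the vectors `w 0`, `w 1`
have vanishing second coordinate, and then the `|001⟩` coefficient of the sum is `0`, not `1`. -/

open Matrix

theorem Matrix.sum_smul_vecMulVec_eq_mul {n R : Type*} [Fintype n] [DecidableEq n] [CommRing R]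
    (ℓ : n → R) (u v : n → n → R) :
    ∑ r, ℓ r • vecMulVec (u r) (v r) = (of u)ᵀ * diagonal ℓ * of v := by
  ext i j
  rw [mul_apply]
  simp only [Matrix.sum_apply, Matrix.smul_apply, vecMulVec_apply, mul_diagonal, transpose_apply,
    of_apply, smul_eq_mul]
  exact Finset.sum_congr rfl fun r _ => by ring

theorem Matrix.det_sum_smul_vecMulVec {n R : Type*} [Fintype n] [DecidableEq n] [CommRing R]
    (ℓ : n → R) (u v : n → n → R) :
    det (∑ r, ℓ r • vecMulVec (u r) (v r)) = det (of u) * det (of v) * ∏ r, ℓ r := by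
  rw [sum_smul_vecMulVec_eq_mul, det_mul, det_mul, det_transpose, det_diagonal]
  ring

def tensorSlice {α β γ R : Type*} [Fintype γ] [Mul R] [AddCommMonoid R]
    (T : α → β → γ → R) (φ : γ → R) : Matrix α β R :=
  of fun i j => T i j ⬝ᵥ φ

theorem tensorSlice_sum {ι α β γ R : Type*} [Fintype γ] [NonUnitalNonAssocSemiring R]
    (s : Finset ι) (T : ι → α → β → γ → R) (φ : γ → R) :
    tensorSlice (∑ r ∈ s, T r) φ = ∑ r ∈ s, tensorSlice (T r) φ := by
  ext i j
  simp [tensorSlice, Matrix.sum_apply, Finset.sum_apply, sum_dotProduct]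

theorem tensorSlice_pureT (u v w φ : Fin 2 → ℂ) :
    tensorSlice (pureT u v w) φ = (w ⬝ᵥ φ) • vecMulVec u v := by
  ext i j
  simp only [tensorSlice, pureT, of_apply, Matrix.smul_apply, vecMulVec_apply, dotProduct,
    Finset.sum_mul, smul_eq_mul]
  exact Finset.sum_congr rfl fun k _ => by ring

theorem det_tensorSlice_sum_pureT (u v w : Fin 2 → Fin 2 → ℂ) (φ : Fin 2 → ℂ) :
    det (tensorSlice (∑ r, pureT (u r) (v r) (w r)) φ) =
      det (of u) * det (of v) * ((w 0 ⬝ᵥ φ) * (w 1 ⬝ᵥ φ)) := by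
  simp_rw [tensorSlice_sum, tensorSlice_pureT, det_sum_smul_vecMulVec, Fin.prod_univ_two]

noncomputable def wState : Fin 2 → Fin 2 → Fin 2 → ℂ := ket 1 0 0 + ket 0 1 0 + ket 0 0 1

theorem tensorSlice_wState (φ : Fin 2 → ℂ) : tensorSlice wState φ = !![φ 1, φ 0; φ 0, 0] := by
  ext i j
  fin_cases i <;> fin_cases j <;> simp [tensorSlice, wState, ket, pureT, e, dotProduct]

theorem det_tensorSlice_wState (φ : Fin 2 → ℂ) : det (tensorSlice wState φ) = -1 * φ 0 ^ 2 := by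
  rw [tensorSlice_wState, det_fin_two_of]
  ring

theorem apply_one_eq_zero_of_forall_mul_dotProduct_eq {K : Type*} [Field K] {D a : K}
    {c g : Fin 2 → K} (ha : a ≠ 0) (h : ∀ φ, D * ((c ⬝ᵥ φ) * (g ⬝ᵥ φ)) = a * φ 0 ^ 2) :
    c 1 = 0 ∧ g 1 = 0 := by
  have h0 := h (Pi.single 0 1)
  have h1 := h (Pi.single 1 1)
  have h01 := h 1
  simp only [dotProduct, Fin.sum_univ_two, Pi.single_eq_same, Pi.one_apply, mul_one, mul_zero,
    Pi.single_eq_of_ne (show (1 : Fin 2) ≠ 0 by decide),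
    Pi.single_eq_of_ne (show (0 : Fin 2) ≠ 1 by decide), add_zero, zero_add, one_pow,
    zero_pow two_ne_zero] at h0 h1 h01
  have hD : D ≠ 0 := left_ne_zero_of_mul (h0 ▸ ha)
  have hc0 : c 0 ≠ 0 := left_ne_zero_of_mul (right_ne_zero_of_mul (h0 ▸ ha))
  have hg0 : g 0 ≠ 0 := right_ne_zero_of_mul (right_ne_zero_of_mul (h0 ▸ ha))
  have hprod : c 1 * g 1 = 0 := (mul_eq_zero.1 h1).resolve_left hD
  have hsum : c 0 * g 1 + c 1 * g 0 = 0 :=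
    (mul_eq_zero.1 (by linear_combination h01 - h0 - h1)).resolve_left hD
  -- `c 0 * g 1` and `c 1 * g 0` have sum `0` and product `c 0 * g 0 * (c 1 * g 1) = 0`
  have hp : c 0 * g 1 = 0 := pow_eq_zero_iff two_ne_zero |>.1 <| by
    linear_combination c 0 * g 1 * hsum - c 0 * g 0 * hprod
  exact ⟨(mul_eq_zero.1 (by linear_combination hsum - hp : c 1 * g 0 = 0)).resolve_right hg0,
    (mul_eq_zero.1 hp).resolve_left hc0⟩

theorem wState_ne_sum_two_pureT (u v w : Fin 2 → Fin 2 → ℂ) :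
    wState ≠ ∑ r, pureT (u r) (v r) (w r) := by
  intro hW
  have hdet (φ : Fin 2 → ℂ) :
      det (of u) * det (of v) * ((w 0 ⬝ᵥ φ) * (w 1 ⬝ᵥ φ)) = -1 * φ 0 ^ 2 := by
    rw [← det_tensorSlice_sum_pureT, ← hW, det_tensorSlice_wState]
  obtain ⟨hw0, hw1⟩ := apply_one_eq_zero_of_forall_mul_dotProduct_eq (by norm_num) hdet
  have h001 := congrFun (congrFun (congrFun hW 0) 0) 1
  simp [wState, ket, pureT, e, Fin.sum_univ_two, hw0, hw1] at h001

theorem wState_eq_sum_three_pureT :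
    wState = ∑ r, pureT (![e 1, e 0, e 0] r) (![e 0, e 1, e 0] r) (![e 0, e 0, e 1] r) := by
  simp [wState, ket, Fin.sum_univ_three]

/-- The W state `|100⟩ + |010⟩ + |001⟩` has tensor rank 3: it is not a sum of two
pure tensors, but it is a sum of three pure tensors. -/
theorem w_state_rank_three :
    ¬ (∃ u v w : Fin 2 → Fin 2 → ℂ,
        ket 1 0 0 + ket 0 1 0 + ket 0 0 1 = ∑ r, pureT (u r) (v r) (w r)) ∧
    (∃ u v w : Fin 3 → Fin 2 → ℂ,
        ket 1 0 0 + ket 0 1 0 + ket 0 0 1 = ∑ r, pureT (u r) (v r) (w r)) :=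
  ⟨fun ⟨u, v, w, hW⟩ => wState_ne_sum_two_pureT u v w hW, ⟨_, _, _, wState_eq_sum_three_pureT⟩⟩
end
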